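/- arXiv:0808.0294 — 2 statements merged into one kernel-verified Lean document; each statement's English description precedes it below -/
import Mathlib

section
/- The lattice T = U⊕U⊕E_8⊕A_1^5 is isometric to U⊕U(2)⊕E_7⊕D_6 and also isometric to U⊕U(2)⊕D_12⊕A_1: there exist P, Q ∈ GL(17,ℤ) carrying the block-diagonal Gram matrix of U⊕U⊕E_8⊕A_1^5 to those of U⊕U(2)⊕E_7⊕D_6 and of U⊕U(2)⊕D_12⊕A_1 respectively. -/
/-!
Both target lattices are even of signature `(2, 15)` with discriminant group `(ℤ/2)⁵` and
discriminant form isomorphic to that of `A₁⁵`, so by Nikulin's uniqueness theorem for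
indefinite even lattices of rank at least `ℓ(A) + 2` each lies in the isometry class of `T`.
The isometries below were found by computer; the kernel checks that they carry Gram matrices
to Gram matrices and have integral inverses.
-/

open Matrix

/-- Gram matrix of the hyperbolic plane `U`. -/
def gramU : Matrix (Fin 2) (Fin 2) ℤ := !![0, 1; 1, 0]

/-- Gram matrix of `U(2)`. -/
def gramU2 : Matrix (Fin 2) (Fin 2) ℤ := !![0, 2; 2, 0]

/-- Gram matrix of `A₁`. -/
def gramA1 : Matrix (Fin 1) (Fin 1) ℤ := !![-2]

/-- Gram matrix of the negative definite root lattice whose Dynkin diagram is a chain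
on nodes `0, …, n-2` together with an extra node `n-1` attached to node `k`
(`k = 2` gives the `E`-series, `k = 1` the `D`-series). -/
def gramRoot (n k : ℕ) : Matrix (Fin n) (Fin n) ℤ :=
  Matrix.of fun i j =>
    if i = j then -2
    else if (((i : ℕ) + 1 = j ∨ (j : ℕ) + 1 = i) ∧ (i : ℕ) + 1 ≠ n ∧ (j : ℕ) + 1 ≠ n) ∨
        ((i : ℕ) + 1 = n ∧ (j : ℕ) = k) ∨ ((j : ℕ) + 1 = n ∧ (i : ℕ) = k) then 1
    else 0

/-- Gram matrix of the standard negative definite root lattice `E₈`. -/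
def gramE8 : Matrix (Fin 8) (Fin 8) ℤ := gramRoot 8 2

/-- Gram matrix of the standard negative definite root lattice `E₇`. -/
def gramE7 : Matrix (Fin 7) (Fin 7) ℤ := gramRoot 7 2

/-- Gram matrix of the standard negative definite root lattice `D₄`. -/
def gramD4 : Matrix (Fin 4) (Fin 4) ℤ := gramRoot 4 1

/-- Gram matrix of the standard negative definite root lattice `D₆`. -/
def gramD6 : Matrix (Fin 6) (Fin 6) ℤ := gramRoot 6 1

/-- Gram matrix of the standard negative definite root lattice `D₁₂`. -/
def gramD12 : Matrix (Fin 12) (Fin 12) ℤ := gramRoot 12 1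

/-- Orthogonal (block diagonal) sum of two Gram matrices. -/
def blockSum {m n : ℕ} (A : Matrix (Fin m) (Fin m) ℤ) (B : Matrix (Fin n) (Fin n) ℤ) :
    Matrix (Fin (m + n)) (Fin (m + n)) ℤ :=
  Matrix.of fun i j =>
    if hi : (i : ℕ) < m then
      if hj : (j : ℕ) < m then A ⟨i, hi⟩ ⟨j, hj⟩ else 0
    else
      if hj : (j : ℕ) < m then 0
      else B ⟨(i : ℕ) - m, by have := i.isLt; omega⟩ ⟨(j : ℕ) - m, by have := j.isLt; omega⟩

/-- Gram matrix of `T = U ⊕ U ⊕ E₈ ⊕ A₁⁵`. -/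
def gramT : Matrix (Fin 17) (Fin 17) ℤ :=
  blockSum gramU (blockSum gramU (blockSum gramE8 (Matrix.diagonal fun _ : Fin 5 => (-2 : ℤ))))

/-- Gram matrix of `U ⊕ U(2) ⊕ E₇ ⊕ D₆`. -/
def gramT₁ : Matrix (Fin 17) (Fin 17) ℤ :=
  blockSum gramU (blockSum gramU2 (blockSum gramE7 gramD6))

/-- Gram matrix of `U ⊕ U(2) ⊕ D₁₂ ⊕ A₁`. -/
def gramT₂ : Matrix (Fin 17) (Fin 17) ℤ :=
  blockSum gramU (blockSum gramU2 (blockSum gramD12 gramA1))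

def IsometricGram {n R : Type*} [Fintype n] [DecidableEq n] [CommRing R]
    (G G' : Matrix n n R) : Prop :=
  ∃ P : Matrix n n R, IsUnit P.det ∧ Pᵀ * G * P = G'

theorem IsometricGram.of_mul_eq_one {n R : Type*} [Fintype n] [DecidableEq n] [CommRing R]
    {G G' P P' : Matrix n n R} (hinv : P' * P = 1) (h : Pᵀ * G * P = G') :
    IsometricGram G G' :=
  ⟨P, isUnit_det_of_left_inverse hinv, h⟩

def isometryT₁ : Matrix (Fin 17) (Fin 17) ℤ :=
  !![-2, -6, 0, 0, -2, 2, -2, 2, 0, 0, 0, 1, 0, 3, -1, 0, -5;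
    -2, -6, 0, 0, -2, 2, -2, 2, 0, 0, 0, 1, 0, 2, -1, 1, -5;
    -2, -6, 2, 2, -2, 2, -2, 2, 0, 0, 0, -1, 0, 3, 0, 0, -5;
    -2, -5, 4, 4, -2, 3, -2, 1, 1, -1, 0, -3, 1, 2, 2, -1, -5;
    -1, -3, 2, 2, -2, 2, -2, 0, 2, -1, 1, -2, 0, 2, 0, 0, -2;
    2, 6, 0, 0, 0, -1, 0, -3, 3, -1, 2, -2, 0, -2, 0, 0, 6;
    3, 9, 0, 0, 0, -2, 0, -4, 4, -2, 4, -3, 0, -3, 0, 0, 9;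
    3, 9, 0, 0, 0, -2, 1, -4, 3, -1, 3, -3, 0, -3, 0, 0, 9;
    2, 6, 0, 0, -1, -1, 1, -3, 2, -1, 2, -2, 0, -2, 0, 0, 6;
    1, 3, 0, 0, -1, 0, 0, -2, 1, 0, 2, -1, 0, -1, 0, 0, 3;
    1, 3, 0, 0, 0, 0, 0, -1, 0, 0, 1, -1, 0, -1, 0, 0, 3;
    2, 7, 0, 0, 1, -2, 1, -3, 2, -1, 2, -2, 0, -2, 0, 0, 6;
    0, 0, 1, 1, 0, 0, 0, 0, 0, 0, 0, -1, 0, 0, 1, 0, 0;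
    0, 0, 1, 1, 0, 0, 0, 0, 0, 0, 0, -1, 0, 0, 1, -1, 0;
    -1, -3, 1, 1, -1, 1, -1, 1, 0, 0, 0, -1, 1, 1, 0, 0, -3;
    -1, -2, 1, 0, -1, 1, -1, 1, 0, 0, 0, 0, 0, 1, 0, 0, -2;
    -1, -2, 0, 1, -1, 1, -1, 1, 0, 0, 0, 0, 0, 1, 0, 0, -2]

def isometryT₁Inv : Matrix (Fin 17) (Fin 17) ℤ :=
  !![-6, -6, -5, -6, 12, -6, 4, -3, 0, 3, -3, -5, 0, 0, 6, 4, 4;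
    -2, -2, -2, -2, 4, -2, 1, -1, 0, 1, -1, -1, 0, 0, 2, 2, 2;
    0, 0, 2, 1, -2, 1, 0, 0, 0, 0, 0, 0, -1, -1, -1, 0, -1;
    0, 0, 2, 1, -2, 1, 0, 0, 0, 0, 0, 0, -1, -1, -1, -1, 0;
    0, 0, -1, 0, 1, -1, 0, 1, -1, 0, 0, 0, 0, 0, 0, 0, 0;
    -2, -2, -4, -2, 6, -4, 1, 1, -1, 1, -1, -2, 0, 0, 2, 2, 2;
    -2, -2, -4, -2, 6, -5, 1, 2, -1, 1, -2, -2, 0, 0, 2, 2, 2;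
    -3, -3, -4, -3, 7, -5, 2, 1, -1, 1, -2, -3, 0, 0, 3, 3, 3;
    -2, -2, -3, -2, 5, -3, 1, 1, -1, 1, -2, -2, 0, 0, 2, 2, 2;
    -1, -1, -1, -1, 2, -1, 0, 1, -1, 1, -1, -1, 0, 0, 1, 1, 1;
    -1, -1, -2, -1, 3, -3, 1, 1, -1, 1, -1, -1, 0, 0, 1, 1, 1;
    1, 0, 3, 2, -4, 2, 0, 0, 0, 0, 0, 0, -1, -2, -2, -1, -1;
    3, 1, 3, 3, -6, 3, -1, 1, 0, -1, 1, 1, 0, -2, -2, -2, -2;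
    1, -1, 0, 0, 0, 0, 0, 0, 0, 0, 0, 0, 1, -1, 0, 0, 0;
    1, 0, -1, 0, 0, 0, 0, 0, 0, 0, 0, 0, 2, 0, 0, 0, 0;
    0, 0, 0, 0, 0, 0, 0, 0, 0, 0, 0, 0, 1, -1, 0, 0, 0;
    4, 3, 4, 4, -8, 4, -2, 2, 0, -2, 2, 2, 0, -1, -4, -3, -3]

def isometryT₂ : Matrix (Fin 17) (Fin 17) ℤ :=
  !![2, 8, 0, 0, -4, 4, -1, 2, -2, 2, 0, -2, 2, -2, 1, -4, 4;
    2, 8, 0, 0, -4, 4, -1, 2, -2, 2, 0, -2, 2, -1, 1, -4, 4;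
    -2, -8, 2, 2, 3, -3, 1, -2, 2, -2, 0, 2, -2, 2, -2, 3, -6;
    -4, -18, 4, 4, 7, -8, 3, -4, 4, -4, 0, 5, -4, 3, -4, 7, -12;
    -3, -12, 2, 2, 5, -5, 3, -4, 2, -2, -1, 4, -3, 2, -2, 5, -8;
    -2, -8, 0, 0, 4, -4, 4, -4, 0, 0, -2, 3, -2, 1, 0, 4, -4;
    -3, -12, 0, 0, 6, -6, 6, -6, 0, 0, -2, 4, -4, 2, 0, 6, -6;
    -1, -4, 0, 0, 2, -2, 4, -3, -2, 2, -2, 2, -2, 1, 0, 2, -2;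
    0, 0, 0, 0, 0, 0, 3, -2, -2, 2, -1, 0, 0, 0, 0, 0, 0;
    0, 0, 0, 0, 0, 0, 2, -1, -2, 1, 0, 0, 0, 0, 0, 0, 0;
    0, 0, 0, 0, 0, 0, 1, 0, -1, 0, 0, 0, 0, 0, 0, 0, 0;
    -1, -5, 0, 0, 2, -2, 3, -3, 0, 0, -1, 2, -2, 1, 0, 2, -2;
    -1, -4, 1, 1, 1, -2, 1, -1, 1, -1, 0, 1, -1, 1, -1, 2, -3;
    -1, -4, 1, 1, 2, -2, 1, -1, 1, -1, 0, 1, -1, 1, -1, 1, -3;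
    -2, -9, 1, 1, 4, -4, 1, -2, 2, -2, 0, 2, -2, 2, -2, 4, -5;
    0, -1, 1, 0, 0, 0, 0, 0, 0, 0, 0, 0, 0, 0, 0, 0, -1;
    0, -1, 0, 1, 0, 0, 0, 0, 0, 0, 0, 0, 0, 0, 0, 0, -1]

def isometryT₂Inv : Matrix (Fin 17) (Fin 17) ℤ :=
  !![8, 8, -18, -8, 16, -8, 7, -4, -4, 0, 0, -2, 8, 8, 18, 2, 2;
    2, 2, -4, -2, 4, -2, 2, -1, -1, 0, 0, -1, 2, 2, 4, 0, 0;
    0, 0, 2, 1, -2, 1, 0, 0, 0, 0, 0, 0, -1, -1, -1, 0, -1;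
    0, 0, 2, 1, -2, 1, 0, 0, 0, 0, 0, 0, -1, -1, -1, -1, 0;
    1, 2, -3, -1, 3, -2, 2, -1, 0, -1, 1, -1, 0, 1, 3, 0, 0;
    -2, 0, 1, 1, 0, -1, 0, 0, 2, -2, 2, 0, -2, -2, -2, 0, 0;
    -2, 0, 0, 1, 0, -1, 0, 0, 2, -2, 2, 0, -1, -1, -2, 0, 0;
    -3, -1, 2, 2, -2, 0, -1, 1, 2, -2, 2, 0, -2, -2, -4, 0, 0;
    -2, 0, 0, 1, 0, -1, 0, 0, 2, -2, 1, 0, -1, -1, -2, 0, 0;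
    -3, -1, 2, 2, -2, 0, -1, 1, 2, -1, 0, 0, -2, -2, -4, 0, 0;
    -2, 0, 0, 1, 0, -1, 0, 0, 1, 0, 0, 0, -1, -1, -2, 0, 0;
    -1, 1, -2, 0, 2, -1, 0, 0, 0, 0, 0, 0, 0, 0, 0, 0, 0;
    -2, 0, 1, 1, -1, 1, -1, 0, 1, 0, 0, 0, -1, -1, -2, 0, 0;
    -1, 1, 0, 0, 0, 0, 0, 0, 0, 0, 0, 0, 0, 0, 0, 0, 0;
    -1, 0, 2, 1, -2, 1, 0, 0, 0, 0, 0, 0, -1, -1, -2, 0, 0;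
    1, 2, -3, -1, 3, -2, 2, -1, 0, -1, 1, -1, 1, 0, 3, 0, 0;
    -2, -2, 6, 3, -6, 3, -2, 1, 1, 0, 0, 1, -3, -3, -5, -1, -1]

theorem isometryT₁Inv_mul_isometryT₁ : isometryT₁Inv * isometryT₁ = 1 := by
  decide +kernel

theorem isometryT₁_transpose_mul_gramT_mul : isometryT₁ᵀ * gramT * isometryT₁ = gramT₁ := by
  decide +kernel

theorem isometryT₂Inv_mul_isometryT₂ : isometryT₂Inv * isometryT₂ = 1 := by
  decide +kernel

theorem isometryT₂_transpose_mul_gramT_mul : isometryT₂ᵀ * gramT * isometryT₂ = gramT₂ := by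
  decide +kernel

/-- `T = U ⊕ U ⊕ E₈ ⊕ A₁⁵` is isometric to `U ⊕ U(2) ⊕ E₇ ⊕ D₆` and to
`U ⊕ U(2) ⊕ D₁₂ ⊕ A₁`. -/
theorem T_isometric_to_U_U2_E7_D6_and_U_U2_D12_A1 :
    (∃ P : Matrix (Fin 17) (Fin 17) ℤ, IsUnit P.det ∧ Pᵀ * gramT * P = gramT₁) ∧
    (∃ Q : Matrix (Fin 17) (Fin 17) ℤ, IsUnit Q.det ∧ Qᵀ * gramT * Q = gramT₂) :=
  ⟨IsometricGram.of_mul_eq_one isometryT₁Inv_mul_isometryT₁ isometryT₁_transpose_mul_gramT_mul,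
    IsometricGram.of_mul_eq_one isometryT₂Inv_mul_isometryT₂ isometryT₂_transpose_mul_gramT_mul⟩
end

section
/- Let T = ℤ^17 with Gram matrix G of U⊕U⊕E_8⊕A_1^5, with e,f the basis of the first U block and r_1,…,r_5 the A_1 basis vectors, and let r = 2(e+f) + r_1 + r_2 + r_3 + r_4 + r_5 (so rᵀGr = -2). Then the orthogonal complement r^⊥ = {x ∈ ℤ^17 : xᵀGr = 0}, with the restricted form, is a rank-16 lattice isometric to U⊕U(2)⊕E_8⊕D_4. -/
/-!
Since `G r = 2 d` with `d = e + f - r₁ - ⋯ - r₅`, `r^⊥` is the kernel of `x ↦ x ⬝ᵥ d`.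
We exhibit 16 vectors of `r^⊥` (the columns of a matrix `M`) whose Gram matrix is that of
`U ⊕ U(2) ⊕ E₈ ⊕ D₄`, together with an integral `L` such that `L M = 1` and `M L = 1 - e dᵀ`:
then `M` is injective, and every `x` with `x ⬝ᵥ d = 0` equals `M (L x)`, so the columns span
`r^⊥` over `ℤ`.
-/

open Matrix

/-- The basis vector `e` of the first copy of `U` in `T`. -/
def eU : Fin 17 → ℤ := Pi.single 0 1

/-- The basis vector `f` of the first copy of `U` in `T`. -/
def fU : Fin 17 → ℤ := Pi.single 1 1

/-- The basis vectors `r₁, …, r₅` of the five copies of `A₁` in `T`. -/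
def rA (k : Fin 5) : Fin 17 → ℤ := Pi.single ⟨12 + (k : ℕ), by have := k.isLt; omega⟩ 1

/-- The vector `r = 2(e+f) + r₁ + r₂ + r₃ + r₄ + r₅` (of square `-2`). -/
def rVec : Fin 17 → ℤ := 2 • (eU + fU) + ∑ k : Fin 5, rA k

/-- Gram matrix of `U ⊕ U(2) ⊕ E₈ ⊕ D₄`. -/
def gramT' : Matrix (Fin 16) (Fin 16) ℤ :=
  blockSum gramU (blockSum gramU2 (blockSum gramE8 gramD4))

namespace Matrix

variable {m n R : Type*} [Fintype m] [Fintype n]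

theorem mulVec_injective_of_mul_eq_one [DecidableEq n] [Semiring R] {M : Matrix m n R}
    {L : Matrix n m R} (h : L * M = 1) : Function.Injective M.mulVec := fun x y hxy => by
  simpa [mulVec_mulVec, h] using congrArg L.mulVec hxy

theorem range_mulVec_eq_setOf_dotProduct_eq_zero [DecidableEq m] [CommRing R]
    {M : Matrix m n R} {L : Matrix n m R} {u d : m → R}
    (hML : M * L = 1 - vecMulVec u d) (hdM : d ᵥ* M = 0) :
    Set.range M.mulVec = {x | x ⬝ᵥ d = 0} := by
  ext x
  constructor
  · rintro ⟨y, rfl⟩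
    rw [Set.mem_ofPred_eq, dotProduct_comm, dotProduct_mulVec, hdM, zero_dotProduct]
  · intro hx
    refine ⟨L *ᵥ x, ?_⟩
    rw [Set.mem_ofPred_eq, dotProduct_comm] at hx
    rw [mulVec_mulVec, hML, sub_mulVec, one_mulVec, vecMulVec_mulVec, hx]
    simp

theorem mulVec_dotProduct_mulVec_mulVec [CommSemiring R] {G : Matrix m m R}
    {G' : Matrix n n R} {M : Matrix m n R} (h : Mᵀ * G * M = G') (x y : n → R) :
    M *ᵥ x ⬝ᵥ G *ᵥ (M *ᵥ y) = x ⬝ᵥ G' *ᵥ y := by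
  rw [← h, ← mulVec_mulVec, ← mulVec_mulVec, dotProduct_mulVec x, vecMul_transpose]

end Matrix

/-- Columns: `e₂, f₂` of the second `U`; the `U(2)` pair `2e + 2f + r₁ + r₂ + r₃ + r₄`,
`2e + 2f + r₁ + r₂ + r₃ + r₅`; the `E₈` basis; the `D₄` roots `e - f`, `-2e - f - r₁ - r₂ - r₃`,
`e + f + r₁ + r₂`, `e + f + r₁ + r₃`. -/
def rPerpBasis : Matrix (Fin 17) (Fin 16) ℤ :=
  !![0, 0, 2, 2, 0, 0, 0, 0, 0, 0, 0, 0, 1, -2, 1, 1;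
    0, 0, 2, 2, 0, 0, 0, 0, 0, 0, 0, 0, -1, -1, 1, 1;
    1, 0, 0, 0, 0, 0, 0, 0, 0, 0, 0, 0, 0, 0, 0, 0;
    0, 1, 0, 0, 0, 0, 0, 0, 0, 0, 0, 0, 0, 0, 0, 0;
    0, 0, 0, 0, 1, 0, 0, 0, 0, 0, 0, 0, 0, 0, 0, 0;
    0, 0, 0, 0, 0, 1, 0, 0, 0, 0, 0, 0, 0, 0, 0, 0;
    0, 0, 0, 0, 0, 0, 1, 0, 0, 0, 0, 0, 0, 0, 0, 0;
    0, 0, 0, 0, 0, 0, 0, 1, 0, 0, 0, 0, 0, 0, 0, 0;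
    0, 0, 0, 0, 0, 0, 0, 0, 1, 0, 0, 0, 0, 0, 0, 0;
    0, 0, 0, 0, 0, 0, 0, 0, 0, 1, 0, 0, 0, 0, 0, 0;
    0, 0, 0, 0, 0, 0, 0, 0, 0, 0, 1, 0, 0, 0, 0, 0;
    0, 0, 0, 0, 0, 0, 0, 0, 0, 0, 0, 1, 0, 0, 0, 0;
    0, 0, 1, 1, 0, 0, 0, 0, 0, 0, 0, 0, 0, -1, 1, 1;
    0, 0, 1, 1, 0, 0, 0, 0, 0, 0, 0, 0, 0, -1, 1, 0;
    0, 0, 1, 1, 0, 0, 0, 0, 0, 0, 0, 0, 0, -1, 0, 1;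
    0, 0, 1, 0, 0, 0, 0, 0, 0, 0, 0, 0, 0, 0, 0, 0;
    0, 0, 0, 1, 0, 0, 0, 0, 0, 0, 0, 0, 0, 0, 0, 0]

def rPerpBasisLeftInv : Matrix (Fin 16) (Fin 17) ℤ :=
  !![0, 0, 1, 0, 0, 0, 0, 0, 0, 0, 0, 0, 0, 0, 0, 0, 0;
    0, 0, 0, 1, 0, 0, 0, 0, 0, 0, 0, 0, 0, 0, 0, 0, 0;
    0, 0, 0, 0, 0, 0, 0, 0, 0, 0, 0, 0, 0, 0, 0, 1, 0;
    0, 0, 0, 0, 0, 0, 0, 0, 0, 0, 0, 0, 0, 0, 0, 0, 1;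
    0, 0, 0, 0, 1, 0, 0, 0, 0, 0, 0, 0, 0, 0, 0, 0, 0;
    0, 0, 0, 0, 0, 1, 0, 0, 0, 0, 0, 0, 0, 0, 0, 0, 0;
    0, 0, 0, 0, 0, 0, 1, 0, 0, 0, 0, 0, 0, 0, 0, 0, 0;
    0, 0, 0, 0, 0, 0, 0, 1, 0, 0, 0, 0, 0, 0, 0, 0, 0;
    0, 0, 0, 0, 0, 0, 0, 0, 1, 0, 0, 0, 0, 0, 0, 0, 0;
    0, 0, 0, 0, 0, 0, 0, 0, 0, 1, 0, 0, 0, 0, 0, 0, 0;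
    0, 0, 0, 0, 0, 0, 0, 0, 0, 0, 1, 0, 0, 0, 0, 0, 0;
    0, 0, 0, 0, 0, 0, 0, 0, 0, 0, 0, 1, 0, 0, 0, 0, 0;
    0, -1, 0, 0, 0, 0, 0, 0, 0, 0, 0, 0, 1, 0, 0, 1, 1;
    0, 0, 0, 0, 0, 0, 0, 0, 0, 0, 0, 0, 1, -1, -1, 1, 1;
    0, 0, 0, 0, 0, 0, 0, 0, 0, 0, 0, 0, 1, 0, -1, 0, 0;
    0, 0, 0, 0, 0, 0, 0, 0, 0, 0, 0, 0, 1, -1, 0, 0, 0]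

def halfGramR : Fin 17 → ℤ := ![1, 1, 0, 0, 0, 0, 0, 0, 0, 0, 0, 0, -1, -1, -1, -1, -1]

lemma gramT_mulVec_rVec : gramT *ᵥ rVec = 2 • halfGramR := by decide

lemma rVec_dotProduct_gramT_mulVec_rVec : rVec ⬝ᵥ gramT *ᵥ rVec = -2 := by decide

lemma rPerpBasisLeftInv_mul_rPerpBasis : rPerpBasisLeftInv * rPerpBasis = 1 := by decide

lemma rPerpBasis_mul_rPerpBasisLeftInv :
    rPerpBasis * rPerpBasisLeftInv = 1 - vecMulVec (Pi.single 0 1) halfGramR := by decide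

lemma halfGramR_vecMul_rPerpBasis : halfGramR ᵥ* rPerpBasis = 0 := by decide

lemma rPerpBasis_gram : rPerpBasisᵀ * gramT * rPerpBasis = gramT' := by decide

lemma dotProduct_gramT_mulVec_rVec_eq_zero_iff (x : Fin 17 → ℤ) :
    x ⬝ᵥ gramT *ᵥ rVec = 0 ↔ x ⬝ᵥ halfGramR = 0 := by
  rw [gramT_mulVec_rVec, dotProduct_smul, smul_eq_zero]
  simp

/-- The orthogonal complement of `r = 2(e+f) + r₁ + ⋯ + r₅` in `T = U ⊕ U ⊕ E₈ ⊕ A₁⁵`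
is a rank-16 lattice isometric to `U ⊕ U(2) ⊕ E₈ ⊕ D₄`. -/
theorem complement_of_r_in_T :
    rVec ⬝ᵥ gramT.mulVec rVec = -2 ∧
    ∃ φ : (Fin 16 → ℤ) →ₗ[ℤ] (Fin 17 → ℤ),
      Function.Injective φ ∧
      Set.range φ = {x : Fin 17 → ℤ | x ⬝ᵥ gramT.mulVec rVec = 0} ∧
      ∀ x y : Fin 16 → ℤ, (φ x) ⬝ᵥ gramT.mulVec (φ y) = x ⬝ᵥ gramT'.mulVec y := by
  refine ⟨rVec_dotProduct_gramT_mulVec_rVec, rPerpBasis.mulVecLin, ?_, ?_,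
    mulVec_dotProduct_mulVec_mulVec rPerpBasis_gram⟩
  · exact mulVec_injective_of_mul_eq_one rPerpBasisLeftInv_mul_rPerpBasis
  · rw [coe_mulVecLin, range_mulVec_eq_setOf_dotProduct_eq_zero
      rPerpBasis_mul_rPerpBasisLeftInv halfGramR_vecMul_rPerpBasis]
    ext x
    exact (dotProduct_gramT_mulVec_rVec_eq_zero_iff x).symm
end
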